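/- Let w be a 1-prefix normal binary word. A word w is 1-prefix normal if and only if for all i, j ≥ 1 with i + j − 1 ≤ |w|₁, pos₁(w, i) + pos₁(w, j) − 1 ≤ pos₁(w, i + j − 1). -/

import Mathlib

/-!
Write `F k` for the number of 1s in the length-`k` prefix of `w`. The factor of length `k` that
starts after position `m` contains `F (m + k) - F m` ones, so `w` is 1-prefix normal exactly when
`F` is subadditive. Since `pos1 w` is the lower inverse of `F` (`pos1 w i ≤ k ↔ i ≤ F k`),
subadditivity of `F` translates into the stated inequality: the factor running from the `i`-th to
the `(i + j - 1)`-th one has length `pos1 w (i + j - 1) - pos1 w i + 1` and contains `j` ones.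
-/

/-- `w` is 1-prefix normal: no factor of `w` has more 1s than the prefix of the same length. -/
def IsPrefixNormal1 (w : List Bool) : Prop :=
  ∀ v : List Bool, v <:+: w → v.count true ≤ (w.take v.length).count true

/-- Position of the `i`-th 1 in `w`: least `k` such that the length-`k` prefix contains `i` ones. -/
noncomputable def pos1 (w : List Bool) (i : ℕ) : ℕ :=
  sInf {k : ℕ | ((w.take k).count true) = i}

namespace List

variable {α : Type*} [BEq α] (l : List α) (a : α)

theorem count_take_mono : Monotone fun k => (l.take k).count a :=
  fun _ _ h => (take_sublist_take_left h).count_le a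

theorem count_take_succ_le (k : ℕ) : (l.take (k + 1)).count a ≤ (l.take k).count a + 1 := by
  rw [take_add, count_append]
  have := ((l.drop k).take 1).count_le_length (a := a)
  have := length_take_le 1 (l.drop k)
  omega

theorem exists_count_take_eq {i k : ℕ} (h : i ≤ (l.take k).count a) :
    ∃ m ≤ k, (l.take m).count a = i := by
  induction k with
  | zero => exact ⟨0, le_rfl, by simp_all⟩
  | succ k ih =>
    by_cases hk : i ≤ (l.take k).count a
    · obtain ⟨m, hm, hc⟩ := ih hk
      exact ⟨m, hm.trans k.le_succ, hc⟩
    · exact ⟨k + 1, le_rfl, by have := count_take_succ_le l a k; omega⟩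

end List

theorem isPrefixNormal1_iff_count_take_add_le (w : List Bool) :
    IsPrefixNormal1 w ↔
      ∀ m k, (w.take (m + k)).count true ≤ (w.take m).count true + (w.take k).count true := by
  constructor
  · intro hw m k
    have hinf : (w.take (m + k)).drop m <:+: w :=
      (List.drop_suffix _ _).isInfix.trans (List.take_prefix _ _).isInfix
    have hlen : ((w.take (m + k)).drop m).length ≤ k := by
      simp only [List.length_drop, List.length_take]; omega
    calc (w.take (m + k)).count true
        = ((w.take (m + k)).take m).count true + ((w.take (m + k)).drop m).count true := by
          rw [← List.count_append, List.take_append_drop]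
      _ ≤ (w.take m).count true + (w.take k).count true := by
          gcongr
          · rw [List.take_take]; exact List.count_take_mono w true (min_le_left _ _)
          · exact (hw _ hinf).trans (List.count_take_mono w true hlen)
  · rintro hw v ⟨s, t, rfl⟩
    have := hw s.length v.length
    rw [List.append_assoc, List.take_left, ← List.append_assoc, List.take_left' (by simp),
      List.count_append] at this
    omega

section Pos1

variable (w : List Bool) {i : ℕ}

theorem count_take_pos1 (h : i ≤ w.count true) : (w.take (pos1 w i)).count true = i := by
  obtain ⟨m, -, hm⟩ := List.exists_count_take_eq w true (k := w.length) (by simpa using h)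
  exact Nat.sInf_mem (s := {k | (w.take k).count true = i}) ⟨m, hm⟩

theorem pos1_le_iff (h : i ≤ w.count true) (k : ℕ) :
    pos1 w i ≤ k ↔ i ≤ (w.take k).count true := by
  refine ⟨fun hk => ?_, fun hk => ?_⟩
  · exact (count_take_pos1 w h).symm.le.trans (List.count_take_mono w true hk)
  · obtain ⟨m, hmk, hm⟩ := List.exists_count_take_eq w true hk
    exact (show pos1 w i ≤ m from Nat.sInf_le hm).trans hmk

theorem one_le_pos1 (hi : 1 ≤ i) (h : i ≤ w.count true) : 1 ≤ pos1 w i := by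
  by_contra! h0
  have := (pos1_le_iff w h 0).1 (by omega)
  simp only [List.take_zero, List.count_nil] at this
  omega

theorem count_take_pos1_sub_one (hi : 1 ≤ i) (h : i ≤ w.count true) :
    (w.take (pos1 w i - 1)).count true = i - 1 := by
  have hpos := one_le_pos1 w hi h
  have hlt : ¬ i ≤ (w.take (pos1 w i - 1)).count true := by
    rw [← pos1_le_iff w h]; omega
  have hstep := List.count_take_succ_le w true (pos1 w i - 1)
  rw [Nat.sub_add_cancel hpos, count_take_pos1 w h] at hstep
  omega

end Pos1

theorem pos1_add_pos1_le_of_count_take_add_le (w : List Bool)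
    (hw : ∀ m k, (w.take (m + k)).count true ≤ (w.take m).count true + (w.take k).count true)
    {i j : ℕ} (hi : 1 ≤ i) (hj : 1 ≤ j) (hij : i + j - 1 ≤ w.count true) :
    pos1 w i + pos1 w j - 1 ≤ pos1 w (i + j - 1) := by
  have hic : i ≤ w.count true := by omega
  have hjc : j ≤ w.count true := by omega
  have hir : pos1 w i ≤ pos1 w (i + j - 1) := by
    rw [pos1_le_iff w hic, count_take_pos1 w hij]; omega
  set k := pos1 w (i + j - 1) - (pos1 w i - 1)
  have hsplit := hw (pos1 w i - 1) k
  rw [show pos1 w i - 1 + k = pos1 w (i + j - 1) by omega, count_take_pos1 w hij,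
    count_take_pos1_sub_one w hi hic] at hsplit
  have hjk : pos1 w j ≤ k := (pos1_le_iff w hjc k).2 (by omega)
  have := one_le_pos1 w hj hjc
  omega

theorem count_take_add_le_of_pos1_add_pos1_le (w : List Bool)
    (hw : ∀ i j, 1 ≤ i → 1 ≤ j → i + j - 1 ≤ w.count true →
      pos1 w i + pos1 w j - 1 ≤ pos1 w (i + j - 1)) (m k : ℕ) :
    (w.take (m + k)).count true ≤ (w.take m).count true + (w.take k).count true := by
  set c := (w.take m).count true
  set d := (w.take (m + k)).count true
  by_cases hdc : d ≤ c
  · omega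
  have hdw : d ≤ w.count true := (List.take_sublist _ _).count_le true
  have hij := hw (c + 1) (d - c) le_add_self (by omega) (by omega)
  rw [show c + 1 + (d - c) - 1 = d by omega] at hij
  have hm : m < pos1 w (c + 1) := by
    rw [← not_le, pos1_le_iff w (by omega)]; omega
  have hd : pos1 w d ≤ m + k := (pos1_le_iff w hdw _).2 le_rfl
  have hjk : pos1 w (d - c) ≤ k := by omega
  have := (pos1_le_iff w (by omega) k).1 hjk
  omega

theorem stmt_10 (w : List Bool) :
    IsPrefixNormal1 w ↔
      ∀ i j, 1 ≤ i → 1 ≤ j → i + j - 1 ≤ w.count true →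
        pos1 w i + pos1 w j - 1 ≤ pos1 w (i + j - 1) := by
  rw [isPrefixNormal1_iff_count_take_add_le]
  exact ⟨fun hw _ _ => pos1_add_pos1_le_of_count_take_add_le w hw,
    count_take_add_le_of_pos1_add_pos1_le w⟩
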